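/- The tweaked Ramanujan (SAM) formula is asymptotic to the Gamma function: lim_{x→∞} Γ(x+1) / (√π·(x/e)^x·(8x³ + 4x² + x + (1 - 11/(8x) + 79/(112x²) + A/x³)/30)^(1/6)) = 1, where A = 380279456577/722091376690. -/

import Mathlib

/-!
Stirling's formula for the real Gamma function is reduced to Mathlib's version for `n!`.
Both `log Γ(x + 1)` (log-convex, with increments `log Γ(a + 1) - log Γ a = log a`) and
`x log x - x` (convex, with derivative `log x`) stay within `O(1/n)` of their chords of slope
`log n` on `[n, n + 1]`, so the logarithm of `Γ(x + 1) / (√(2x) (x/e)^x)` moves by `O(1/⌊x⌋)`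
between `⌊x⌋` and `x`. The SAM polynomial is `8x³(1 + o(1))`, so its sixth root is
`√(2x)(1 + o(1))`.
-/

open Real Filter Topology

lemma log_sub_log_le_div {a b : ℝ} (ha : 0 < a) (hb : 0 < b) : log b - log a ≤ (b - a) / a := by
  calc log b - log a = log (b / a) := (log_div hb.ne' ha.ne').symm
    _ ≤ b / a - 1 := log_le_sub_one_of_pos (div_pos hb ha)
    _ = (b - a) / a := by field_simp

lemma sub_mul_log_le_mul_log_sub_mul_log {a b : ℝ} (ha : 0 < a) (hb : 0 < b) :
    (b - a) * log a ≤ (b * log b - b) - (a * log a - a) := by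
  have h : b * (log a - log b) ≤ a - b := by
    have := log_sub_log_le_div hb ha
    rwa [le_div_iff₀ hb, mul_comm] at this
  linarith

lemma log_Gamma_add_le {a s : ℝ} (ha : 0 < a) (hs₀ : 0 ≤ s) (hs₁ : s ≤ 1) :
    log (Gamma (a + s)) ≤ log (Gamma a) + s * log a := by
  have h := convexOn_log_Gamma.2 (Set.mem_Ioi.2 ha) (Set.mem_Ioi.2 (by linarith : 0 < a + 1))
    (by linarith : 0 ≤ 1 - s) hs₀ (by ring)
  simp only [smul_eq_mul, Function.comp_apply] at h
  rw [Gamma_add_one ha.ne', log_mul ha.ne' (Gamma_pos_of_pos ha).ne'] at h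
  calc log (Gamma (a + s)) = log (Gamma ((1 - s) * a + s * (a + 1))) := by ring_nf
    _ ≤ _ := h
    _ = _ := by ring

lemma le_log_Gamma_add {a s : ℝ} (ha : 0 < a) (hs₀ : 0 ≤ s) (hs₁ : s ≤ 1) :
    log (Gamma a) + s * log a - 1 / a ≤ log (Gamma (a + s)) := by
  have h := log_Gamma_add_le (a := a + s) (s := 1 - s) (by linarith) (by linarith) (by linarith)
  rw [add_add_sub_cancel, Gamma_add_one ha.ne', log_mul ha.ne' (Gamma_pos_of_pos ha).ne'] at h
  have hlog : (1 - s) * (log (a + s) - log a) ≤ 1 / a :=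
    calc (1 - s) * (log (a + s) - log a) ≤ 1 * (s / a) := by
          refine mul_le_mul (by linarith) ?_ (sub_nonneg.2 (log_le_log ha (by linarith)))
            zero_le_one
          simpa using log_sub_log_le_div ha (by linarith : 0 < a + s)
      _ ≤ 1 / a := by rw [one_mul]; exact div_le_div_of_nonneg_right hs₁ ha.le
  linarith

noncomputable def stirlingLog (x : ℝ) : ℝ :=
  log (Gamma (x + 1) / (√(2 * x) * (x / exp 1) ^ x))

lemma stirlingLog_eq {x : ℝ} (hx : 0 < x) :
    stirlingLog x = log (Gamma (x + 1)) - (x * log x - x) - log (2 * x) / 2 := by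
  rw [stirlingLog, log_div (Gamma_pos_of_pos (by linarith)).ne' (by positivity),
    log_mul (by positivity) (by positivity), log_sqrt (by positivity), log_rpow (by positivity),
    log_div hx.ne' (exp_ne_zero 1), log_exp]
  ring

lemma stirlingLog_natCast (n : ℕ) : stirlingLog n = log (Stirling.stirlingSeq n) := by
  rw [stirlingLog, Gamma_nat_eq_factorial, rpow_natCast, Stirling.stirlingSeq]

lemma abs_stirlingLog_sub_stirlingLog_floor_le {x : ℝ} (hx : 1 ≤ x) :
    |stirlingLog x - stirlingLog ⌊x⌋₊| ≤ 2 / ⌊x⌋₊ := by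
  set n := ⌊x⌋₊
  have hn : (1 : ℝ) ≤ n := by exact_mod_cast Nat.le_floor (by exact_mod_cast hx)
  have hnx : (n : ℝ) ≤ x := Nat.floor_le (by linarith)
  have hxn : x < n + 1 := Nat.lt_floor_add_one x
  have hΓ_le := log_Gamma_add_le (a := n + 1) (s := x - n) (by linarith) (by linarith) (by linarith)
  have hΓ_ge := le_log_Gamma_add (a := n + 1) (s := x - n) (by linarith) (by linarith) (by linarith)
  rw [show (n : ℝ) + 1 + (x - n) = x + 1 by ring] at hΓ_le hΓ_ge
  have hφ_ge := sub_mul_log_le_mul_log_sub_mul_log (by linarith : (0 : ℝ) < n) (by linarith : 0 < x)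
  have hφ_le := sub_mul_log_le_mul_log_sub_mul_log (by linarith : 0 < x) (by linarith : (0 : ℝ) < n)
  have hlog_nx : log n ≤ log x := log_le_log (by linarith) hnx
  have hlog_xn : log x ≤ log (n + 1) := log_le_log (by linarith) hxn.le
  have hlog_x : log x - log n ≤ 1 / n :=
    (log_sub_log_le_div (by linarith) (by linarith)).trans
      (div_le_div_of_nonneg_right (by linarith) (by linarith))
  have hlog_succ : (x - n) * (log (n + 1) - log n) ≤ 1 / n :=
    calc (x - n) * (log (n + 1) - log n) ≤ 1 * (1 / n) := by
          refine mul_le_mul (by linarith) ?_ (by linarith) zero_le_one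
          simpa using log_sub_log_le_div (by linarith : (0 : ℝ) < n) (by linarith : (0 : ℝ) < n + 1)
      _ = 1 / n := one_mul _
  have hgap : 0 ≤ (x - n) * (log (n + 1) - log x) := mul_nonneg (by linarith) (by linarith)
  have hinv : 1 / ((n : ℝ) + 1) ≤ 1 / n := one_div_le_one_div_of_le (by linarith) (by linarith)
  have hinv_nonneg : 0 ≤ 1 / (n : ℝ) := by positivity
  rw [stirlingLog_eq (by linarith), stirlingLog_eq (by linarith),
    log_mul two_ne_zero (by linarith), log_mul two_ne_zero (by linarith), abs_le,
    show (2 : ℝ) / n = 2 * (1 / n) by ring]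
  constructor <;> linarith

lemma tendsto_stirlingLog : Tendsto stirlingLog atTop (𝓝 (log √π)) := by
  have h_floor : Tendsto (fun x : ℝ => stirlingLog ⌊x⌋₊) atTop (𝓝 (log √π)) := by
    have := ((continuousAt_log (by positivity)).tendsto.comp
      Stirling.tendsto_stirlingSeq_sqrt_pi).comp (tendsto_nat_floor_atTop (α := ℝ))
    simpa only [Function.comp_def, ← stirlingLog_natCast] using this
  have h_diff : Tendsto (fun x : ℝ => stirlingLog x - stirlingLog ⌊x⌋₊) atTop (𝓝 0) := by
    refine squeeze_zero_norm' ?_ ((tendsto_const_nhds (x := (2 : ℝ))).div_atTop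
      (tendsto_natCast_atTop_atTop.comp (tendsto_nat_floor_atTop (α := ℝ))))
    filter_upwards [eventually_ge_atTop 1] with x hx
    exact abs_stirlingLog_sub_stirlingLog_floor_le hx
  simpa using h_floor.add h_diff

theorem tendsto_Gamma_add_one_div_stirling :
    Tendsto (fun x : ℝ => Gamma (x + 1) / (√(2 * x) * (x / exp 1) ^ x)) atTop (𝓝 √π) := by
  have := (continuous_exp.tendsto _).comp tendsto_stirlingLog
  rw [Function.comp_def, exp_log (by positivity)] at this
  refine this.congr' ?_
  filter_upwards [eventually_gt_atTop 0] with x hx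
  rw [stirlingLog, exp_log (div_pos (Gamma_pos_of_pos (by linarith)) (by positivity))]

lemma rpow_one_sixth_eight_mul_pow_three {x : ℝ} (hx : 0 ≤ x) :
    (8 * x ^ 3) ^ ((1 : ℝ) / 6) = √(2 * x) := by
  rw [show 8 * x ^ 3 = (2 * x) ^ (3 : ℕ) by ring, ← rpow_natCast, ← rpow_mul (by positivity),
    sqrt_eq_rpow]
  norm_num

lemma tendsto_rpow_one_sixth_div_sqrt {P : ℝ → ℝ}
    (hP : Tendsto (fun x => P x / (8 * x ^ 3)) atTop (𝓝 1)) :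
    Tendsto (fun x => P x ^ ((1 : ℝ) / 6) / √(2 * x)) atTop (𝓝 1) := by
  have h := hP.rpow_const (p := 1 / 6) (Or.inl one_ne_zero)
  rw [one_rpow] at h
  refine h.congr' ?_
  filter_upwards [eventually_gt_atTop 0, hP.eventually (lt_mem_nhds one_pos)] with x hx hPx
  have hP₀ : 0 ≤ P x :=
    ((div_pos_iff_of_pos_right (by positivity : (0 : ℝ) < 8 * x ^ 3)).1 hPx).le
  rw [div_rpow hP₀ (by positivity), rpow_one_sixth_eight_mul_pow_three hx.le]

lemma tendsto_sam_div_eight_mul_pow_three :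
    Tendsto (fun x : ℝ => (8 * x ^ 3 + 4 * x ^ 2 + x +
      (1 - 11 / (8 * x) + 79 / (112 * x ^ 2) + (380279456577 / 722091376690) / x ^ 3) / 30) /
        (8 * x ^ 3)) atTop (𝓝 1) := by
  -- in the variable `u = 1 / x` the ratio is a polynomial with constant term `1`
  let q : ℝ → ℝ := fun u => 1 + u / 2 + u ^ 2 / 8 +
    (u ^ 3 - 11 / 8 * u ^ 4 + 79 / 112 * u ^ 5 + 380279456577 / 722091376690 * u ^ 6) / 240
  have hq : Tendsto (fun x : ℝ => q x⁻¹) atTop (𝓝 (q 0)) :=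
    ((show Continuous q by fun_prop).tendsto 0).comp tendsto_inv_atTop_zero
  rw [show q 0 = 1 by norm_num [q]] at hq
  refine hq.congr' ?_
  filter_upwards [eventually_gt_atTop 0] with x hx
  simp only [q]
  field_simp
  ring

theorem stmt_10 :
    Tendsto (fun x : ℝ => Gamma (x + 1) /
      (Real.sqrt π * (x / exp 1) ^ x *
        (8 * x ^ 3 + 4 * x ^ 2 + x +
          (1 - 11 / (8 * x) + 79 / (112 * x ^ 2) +
            (380279456577 / 722091376690) / x ^ 3) / 30) ^ ((1:ℝ)/6))) atTop (nhds 1) := by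
  have h := (tendsto_Gamma_add_one_div_stirling.div_const √π).div
    (tendsto_rpow_one_sixth_div_sqrt tendsto_sam_div_eight_mul_pow_three) one_ne_zero
  rw [div_self (by positivity), div_one] at h
  refine h.congr' ?_
  filter_upwards [eventually_gt_atTop 0] with x hx
  simp only [Pi.div_apply]
  field_simp
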